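/- Existence and uniqueness for the discrete forward time-fractional Fokker–Planck scheme: Let g be a numerical Hamiltonian, C¹ in q and satisfying (G1) (nonincreasing in q₁ and q₃, nondecreasing in q₂ and q₄), let (Uⁿ)_{n=0}^{N−1} be given grid functions, and let M⁰ be a given grid function. Then there exists δ > 0 (depending on h and on the partial derivatives of g along [D_hUⁿ]) such that for all Δt < δ, there exists a unique family of grid functions (Mⁿ)_{n=1}^N satisfying D^α_{Δt}M^{n+1}_{i,j} − (Δ_hM^{n+1})_{i,j} − B_{i,j}(Uⁿ, M^{n+1}) = 0 for all n = 0,…,N−1 and all (i,j). -/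

import Mathlib

open Real Finset

noncomputable section

/-- forward L1 coefficients `c_k^n` -/
def cF (α : ℝ) (n k : ℕ) : ℝ :=
  if k = 0 then (n : ℝ) ^ (1 - α) - ((n : ℝ) - 1) ^ (1 - α)
  else 2 * ((n : ℝ) - k) ^ (1 - α) - ((n : ℝ) + 1 - k) ^ (1 - α) - ((n : ℝ) - 1 - k) ^ (1 - α)

/-- backward L1 coefficients `c̄_n^k` (with horizon `N`) -/
def cB (α : ℝ) (N n k : ℕ) : ℝ :=
  if k = N then ((N : ℝ) - n) ^ (1 - α) - ((N : ℝ) - 1 - n) ^ (1 - α)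
  else 2 * ((k : ℝ) - n) ^ (1 - α) - ((k : ℝ) + 1 - n) ^ (1 - α) - ((k : ℝ) - 1 - n) ^ (1 - α)

/-- `ρ_α = Γ(2-α) Δt^α` -/
def rhoA (α Δt : ℝ) : ℝ := Real.Gamma (2 - α) * Δt ^ α

/-- discrete forward Caputo derivative (L1 scheme) -/
def DF (α Δt : ℝ) (w : ℕ → ℝ) (n : ℕ) : ℝ :=
  (rhoA α Δt)⁻¹ * (w n - ∑ k ∈ Finset.range n, cF α n k * w k)

/-- discrete backward Caputo derivative (L1 scheme) -/
def DB (α Δt : ℝ) (N : ℕ) (w : ℕ → ℝ) (n : ℕ) : ℝ :=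
  (rhoA α Δt)⁻¹ * (w n - ∑ k ∈ Finset.Icc (n + 1) N, cB α N n k * w k)

/-- grid functions on the uniform periodic grid of the 2-torus -/
abbrev GridFun (Nh : ℕ) := ZMod Nh → ZMod Nh → ℝ

/-- mesh step `h = 1/N_h` -/
def hstep (Nh : ℕ) : ℝ := (Nh : ℝ)⁻¹

/-- grid point `x_{i,j} = (i h, j h)` -/
def gridPt (Nh : ℕ) (i j : ZMod Nh) : ℝ × ℝ :=
  ((i.val : ℝ) * hstep Nh, (j.val : ℝ) * hstep Nh)

/-- forward difference in the first variable -/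
def D1p (Nh : ℕ) (U : GridFun Nh) (i j : ZMod Nh) : ℝ := (U (i + 1) j - U i j) / hstep Nh

/-- forward difference in the second variable -/
def D2p (Nh : ℕ) (U : GridFun Nh) (i j : ZMod Nh) : ℝ := (U i (j + 1) - U i j) / hstep Nh

/-- the discrete gradient `[D_h U]_{i,j} ∈ ℝ⁴` -/
def Dh (Nh : ℕ) (U : GridFun Nh) (i j : ZMod Nh) : Fin 4 → ℝ :=
  ![D1p Nh U i j, D1p Nh U (i - 1) j, D2p Nh U i j, D2p Nh U i (j - 1)]

/-- five point discrete Laplacian -/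
def lapl (Nh : ℕ) (U : GridFun Nh) (i j : ZMod Nh) : ℝ :=
  -(4 * U i j - U (i + 1) j - U (i - 1) j - U i (j + 1) - U i (j - 1)) / (hstep Nh) ^ 2

/-- the scalar product `(U,V)₂ = h² Σ_{i,j} U_{i,j} V_{i,j}` -/
def inner2 (Nh : ℕ) [NeZero Nh] (U V : GridFun Nh) : ℝ :=
  (hstep Nh) ^ 2 * ∑ i : ZMod Nh, ∑ j : ZMod Nh, U i j * V i j

/-- the set `𝒦_h` of discrete probability measures -/
def Kh (Nh : ℕ) [NeZero Nh] : Set (GridFun Nh) :=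
  {M | (∀ i j, 0 ≤ M i j) ∧ inner2 Nh M (fun _ _ => 1) = 1}

/-- partial derivative `∂_{q_k} g(q)` -/
def gq (g : (Fin 4 → ℝ) → ℝ) (q : Fin 4 → ℝ) (k : Fin 4) : ℝ :=
  fderiv ℝ g q (Pi.single k 1)

/-- (G1): `g` nonincreasing in `q₁, q₃` and nondecreasing in `q₂, q₄` -/
def G1 (g : (Fin 4 → ℝ) → ℝ) : Prop :=
  (∀ q : Fin 4 → ℝ, Antitone fun s => g (Function.update q 0 s)) ∧
  (∀ q : Fin 4 → ℝ, Monotone fun s => g (Function.update q 1 s)) ∧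
  (∀ q : Fin 4 → ℝ, Antitone fun s => g (Function.update q 2 s)) ∧
  (∀ q : Fin 4 → ℝ, Monotone fun s => g (Function.update q 3 s))

/-- the discrete transport operator `𝓑_{i,j}(U,M)` -/
def Bop (Nh : ℕ) (g : ZMod Nh → ZMod Nh → (Fin 4 → ℝ) → ℝ) (U M : GridFun Nh)
    (i j : ZMod Nh) : ℝ :=
  (hstep Nh)⁻¹ *
    (M i j * gq (g i j) (Dh Nh U i j) 0 - M (i - 1) j * gq (g (i - 1) j) (Dh Nh U (i - 1) j) 0
     + M (i + 1) j * gq (g (i + 1) j) (Dh Nh U (i + 1) j) 1 - M i j * gq (g i j) (Dh Nh U i j) 1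
     + M i j * gq (g i j) (Dh Nh U i j) 2 - M i (j - 1) * gq (g i (j - 1)) (Dh Nh U i (j - 1)) 2
     + M i (j + 1) * gq (g i (j + 1)) (Dh Nh U i (j + 1)) 3 - M i j * gq (g i j) (Dh Nh U i j) 3)

/-! The scheme is linear and implicit: step `n` asks for `M^{n+1}` with
`(1 - ρ_α A_n) M^{n+1} = Σ_{k ≤ n} c_k^{n+1} M^k`, where `A_n := Δ_h + 𝓑(Uⁿ, ·)` is a linear
operator on the finite-dimensional space of grid functions. Since `ρ_α = Γ(2-α) Δt^α → 0` as
`Δt → 0⁺`, for small `Δt` every `‖ρ_α A_n‖` with `n < N` is below `1`, so each `1 - ρ_α A_n` is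
invertible by the Neumann series, and the steps can be solved one after another, uniquely. -/

open Filter Topology Function

section ImplicitRecursion

variable {E : Type*} {N : ℕ} (L : ℕ → E → E) (b : ℕ → (ℕ → E) → E)

theorem exists_implicit_recursion (hL : ∀ n < N, Surjective (L n))
    (hb : ∀ n x y, (∀ k ≤ n, x k = y k) → b n x = b n y) (a : E) :
    ∃ x : ℕ → E, x 0 = a ∧ ∀ n < N, L n (x (n + 1)) = b n x := by
  induction N with
  | zero => exact ⟨fun _ => a, rfl, fun n hn => absurd hn n.not_lt_zero⟩
  | succ N ih =>
    obtain ⟨x, hx0, hx⟩ := ih fun n hn => hL n (by omega)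
    obtain ⟨z, hz⟩ := hL N N.lt_succ_self (b N x)
    have hagree : ∀ n < N + 1, ∀ k ≤ n, update x (N + 1) z k = x k :=
      fun n hn k hk => update_of_ne (by omega) _ _
    refine ⟨update x (N + 1) z, by rwa [update_of_ne (by omega)], fun n hn => ?_⟩
    rw [hb n _ x (hagree n hn)]
    rcases Nat.lt_succ_iff_lt_or_eq.mp hn with hn | rfl
    · rw [update_of_ne (by omega), hx n hn]
    · rw [update_self, hz]

theorem eq_of_implicit_recursion (hL : ∀ n < N, Injective (L n))
    (hb : ∀ n x y, (∀ k ≤ n, x k = y k) → b n x = b n y) {x y : ℕ → E} (h0 : x 0 = y 0)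
    (hx : ∀ n < N, L n (x (n + 1)) = b n x) (hy : ∀ n < N, L n (y (n + 1)) = b n y) :
    ∀ n ≤ N, x n = y n := by
  suffices ∀ m ≤ N, ∀ k ≤ m, x k = y k from fun n hn => this n hn n le_rfl
  intro m hm
  induction m with
  | zero => intro k hk; rwa [Nat.le_zero.mp hk]
  | succ m ih =>
    have ih := ih (by omega)
    intro k hk
    rcases Nat.le_succ_iff.mp hk with hk | rfl
    · exact ih k hk
    · exact hL m (by omega) (by rw [hx m (by omega), hy m (by omega), hb m x y ih])

theorem existsUnique_implicit_recursion (hL : ∀ n < N, Bijective (L n))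
    (hb : ∀ n x y, (∀ k ≤ n, x k = y k) → b n x = b n y) (a : E) :
    ∃ x : ℕ → E, (x 0 = a ∧ ∀ n < N, L n (x (n + 1)) = b n x) ∧
      ∀ y : ℕ → E, (y 0 = a ∧ ∀ n < N, L n (y (n + 1)) = b n y) → ∀ n ≤ N, y n = x n := by
  obtain ⟨x, hx0, hx⟩ := exists_implicit_recursion L b (fun n hn => (hL n hn).2) hb a
  exact ⟨x, ⟨hx0, hx⟩, fun y ⟨hy0, hy⟩ =>
    eq_of_implicit_recursion L b (fun n hn => (hL n hn).1) hb (hy0.trans hx0.symm) hy hx⟩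

end ImplicitRecursion

theorem bijective_one_sub_of_norm_lt_one {𝕜 E : Type*} [NontriviallyNormedField 𝕜]
    [NormedAddCommGroup E] [NormedSpace 𝕜 E] [CompleteSpace E] {T : E →L[𝕜] E}
    (hT : ‖T‖ < 1) : Bijective ⇑(1 - T) :=
  ContinuousLinearMap.isUnit_iff_bijective.mp (isUnit_one_sub_of_norm_lt_one hT)

theorem rhoA_pos {α Δt : ℝ} (hα : α < 2) (hΔt : 0 < Δt) : 0 < rhoA α Δt :=
  mul_pos (Real.Gamma_pos_of_pos (by linarith)) (Real.rpow_pos_of_pos hΔt α)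

theorem tendsto_rhoA_nhdsGT_zero {α : ℝ} (hα : 0 < α) : Tendsto (rhoA α) (𝓝[>] 0) (𝓝 0) := by
  have h := ((Real.continuous_rpow_const hα.le).tendsto 0).const_mul (Real.Gamma (2 - α))
  rw [Real.zero_rpow hα.ne', mul_zero] at h
  exact h.mono_left nhdsWithin_le_nhds

theorem exists_pos_forall_norm_rhoA_smul_lt_one {α : ℝ} (hα : 0 < α) {F : Type*}
    [SeminormedAddCommGroup F] [NormedSpace ℝ F] (A : ℕ → F) (N : ℕ) :
    ∃ δ > 0, ∀ Δt, 0 < Δt → Δt < δ → ∀ n < N, ‖rhoA α Δt • A n‖ < 1 := by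
  have hsmall : ∀ n, ∀ᶠ Δt in 𝓝[>] 0, ‖rhoA α Δt • A n‖ < 1 := fun n => by
    have h := ((tendsto_rhoA_nhdsGT_zero hα).smul_const (A n)).norm
    rw [zero_smul, norm_zero] at h
    exact h.eventually_lt_const one_pos
  have hall : ∀ᶠ Δt in 𝓝[>] 0, ∀ n ∈ Finset.range N, ‖rhoA α Δt • A n‖ < 1 :=
    (eventually_all_finset _).mpr fun n _ => hsmall n
  obtain ⟨δ, hδ, hδall⟩ := (nhdsGT_basis 0).eventually_iff.mp hall
  exact ⟨δ, hδ, fun Δt h0 hδ n hn => hδall ⟨h0, hδ⟩ n (Finset.mem_range.mpr hn)⟩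

def fokkerPlanckOp (Nh : ℕ) [NeZero Nh] (g : ZMod Nh → ZMod Nh → (Fin 4 → ℝ) → ℝ)
    (V : GridFun Nh) : GridFun Nh →L[ℝ] GridFun Nh :=
  LinearMap.toContinuousLinearMap
    { toFun := fun M i j => lapl Nh M i j + Bop Nh g V M i j
      map_add' := fun M M' => by funext i j; simp only [lapl, Bop, Pi.add_apply]; ring
      map_smul' := fun c M => by
        funext i j; simp only [lapl, Bop, Pi.smul_apply, smul_eq_mul, RingHom.id_apply]; ring }

theorem DF_succ_sub_eq_zero_iff {α Δt : ℝ} (hρ : rhoA α Δt ≠ 0) (w : ℕ → ℝ) (n : ℕ) (a : ℝ) :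
    DF α Δt w (n + 1) - a = 0 ↔
      w (n + 1) - rhoA α Δt * a = ∑ k ∈ Finset.range (n + 1), cF α (n + 1) k * w k := by
  rw [DF, sub_eq_zero, inv_mul_eq_iff_eq_mul₀ hρ]
  constructor <;> intro h <;> linarith

theorem scheme_step_iff {α Δt : ℝ} (hρ : rhoA α Δt ≠ 0) (Nh : ℕ) [NeZero Nh]
    (g : ZMod Nh → ZMod Nh → (Fin 4 → ℝ) → ℝ) (V : GridFun Nh) (M : ℕ → GridFun Nh) (n : ℕ) :
    (∀ i j, DF α Δt (fun m => M m i j) (n + 1) - lapl Nh (M (n + 1)) i j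
        - Bop Nh g V (M (n + 1)) i j = 0) ↔
      (1 - rhoA α Δt • fokkerPlanckOp Nh g V) (M (n + 1)) =
        ∑ k ∈ Finset.range (n + 1), cF α (n + 1) k • M k := by
  simp only [sub_sub, DF_succ_sub_eq_zero_iff hρ, funext_iff, Finset.sum_apply]
  rfl

theorem FP_existence_uniqueness_general (α : ℝ) (hα : α ∈ Set.Ioo (0 : ℝ) 1)
    (N Nh : ℕ) [NeZero Nh]
    (g : ZMod Nh → ZMod Nh → (Fin 4 → ℝ) → ℝ)
    (U : ℕ → GridFun Nh) (M0 : GridFun Nh) :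
    ∃ δ > 0, ∀ Δt : ℝ, 0 < Δt → Δt < δ →
      ∃ M : ℕ → GridFun Nh,
        (M 0 = M0 ∧ ∀ n < N, ∀ i j,
          DF α Δt (fun m => M m i j) (n + 1) - lapl Nh (M (n + 1)) i j
            - Bop Nh g (U n) (M (n + 1)) i j = 0) ∧
        ∀ M' : ℕ → GridFun Nh,
          (M' 0 = M0 ∧ ∀ n < N, ∀ i j,
            DF α Δt (fun m => M' m i j) (n + 1) - lapl Nh (M' (n + 1)) i j
              - Bop Nh g (U n) (M' (n + 1)) i j = 0) →
          ∀ n ≤ N, M' n = M n := by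
  obtain ⟨δ, hδ, hsmall⟩ :=
    exists_pos_forall_norm_rhoA_smul_lt_one hα.1 (fun n => fokkerPlanckOp Nh g (U n)) N
  refine ⟨δ, hδ, fun Δt hΔt hΔtδ => ?_⟩
  have hρ : rhoA α Δt ≠ 0 := (rhoA_pos (by linarith [hα.2]) hΔt).ne'
  simp only [scheme_step_iff hρ]
  refine existsUnique_implicit_recursion _ _
    (fun n hn => bijective_one_sub_of_norm_lt_one (hsmall Δt hΔt hΔtδ n hn)) ?_ M0
  exact fun n x y hxy => Finset.sum_congr rfl fun k hk =>
    by rw [hxy k (Nat.lt_succ_iff.mp (Finset.mem_range.mp hk))]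

/-- Existence and uniqueness for the discrete forward time-fractional
Fokker-Planck scheme, for `Δt` sufficiently small. -/
theorem FP_existence_uniqueness (α : ℝ) (hα : α ∈ Set.Ioo (0 : ℝ) 1)
    (N Nh : ℕ) [NeZero Nh]
    (g : ZMod Nh → ZMod Nh → (Fin 4 → ℝ) → ℝ)
    (hgC1 : ∀ i j, ContDiff ℝ 1 (g i j)) (hg1 : ∀ i j, G1 (g i j))
    (U : ℕ → GridFun Nh) (M0 : GridFun Nh) :
    ∃ δ > 0, ∀ Δt : ℝ, 0 < Δt → Δt < δ →
      ∃ M : ℕ → GridFun Nh,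
        (M 0 = M0 ∧ ∀ n < N, ∀ i j,
          DF α Δt (fun m => M m i j) (n + 1) - lapl Nh (M (n + 1)) i j
            - Bop Nh g (U n) (M (n + 1)) i j = 0) ∧
        ∀ M' : ℕ → GridFun Nh,
          (M' 0 = M0 ∧ ∀ n < N, ∀ i j,
            DF α Δt (fun m => M' m i j) (n + 1) - lapl Nh (M' (n + 1)) i j
              - Bop Nh g (U n) (M' (n + 1)) i j = 0) →
          ∀ n ≤ N, M' n = M n :=
  FP_existence_uniqueness_general α hα N Nh g U M0
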